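/- If the lead times are deterministic, i.e. L_t = ℓ almost surely for a fixed natural number ℓ (so μ_L = ℓ and σ_L² = 0), and σ_D² > 0, then the bullwhip effect measure equals Var(q_t)/Var(D_t) = 2ℓ²/n² + 2ℓ/n + 1 for every t ∈ ℤ, recovering the formula of Chen et al. -/

import Mathlib

/-!
With constant lead times both lead-time forecasts equal `ℓ`, so the order quantity telescopes to
`q_t = (1 + ℓ/n) D_{t-1} - (ℓ/n) D_{t-1-n}`: a combination of two independent demands, whose
variance is `((1 + ℓ/n)² + (ℓ/n)²) σ_D²`.
-/

open MeasureTheory ProbabilityTheory Finset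

section MovingAverage

variable {K : Type*} [Field K]

noncomputable def movingAverage (x : ℤ → K) (k : ℕ) (t : ℤ) : K :=
  (k : K)⁻¹ * ∑ i ∈ Icc 1 k, x (t - i)

theorem sum_Icc_lag_sub_sum_Icc_lag {M : Type*} [AddCommGroup M] (x : ℤ → M) (t : ℤ) (k : ℕ) :
    ∑ i ∈ Icc 1 k, x (t - i) - ∑ i ∈ Icc 1 k, x (t - 1 - i) = x (t - 1) - x (t - 1 - k) := by
  induction k with
  | zero => simp
  | succ k ih =>
    rw [sum_Icc_succ_top (by omega), sum_Icc_succ_top (by omega), add_sub_add_comm, ih]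
    have hlag : t - ((k + 1 : ℕ) : ℤ) = t - 1 - k := by push_cast; ring
    rw [hlag]
    abel

theorem movingAverage_sub_movingAverage_pred (x : ℤ → K) (k : ℕ) (t : ℤ) :
    movingAverage x k t - movingAverage x k (t - 1) = (k : K)⁻¹ * (x (t - 1) - x (t - 1 - k)) := by
  rw [movingAverage, movingAverage, ← mul_sub, sum_Icc_lag_sub_sum_Icc_lag]

theorem movingAverage_const [CharZero K] (c : K) {k : ℕ} (hk : k ≠ 0) (t : ℤ) :
    movingAverage (fun _ => c) k t = c := by
  simp [movingAverage, hk]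

end MovingAverage

theorem orderQuantity_of_const_leadTime (x : ℤ → ℝ) (ℓ : ℝ) (n : ℕ) (t : ℤ) :
    ℓ * movingAverage x n t - ℓ * movingAverage x n (t - 1) + x (t - 1)
      = (1 + ℓ / n) * x (t - 1) + (-(ℓ / n)) * x (t - 1 - n) := by
  rw [← mul_sub, movingAverage_sub_movingAverage_pred]
  ring

namespace ProbabilityTheory

theorem IndepFun.variance_const_mul_add_const_mul {Ω : Type*} [MeasurableSpace Ω]
    {μ : Measure Ω} {X Y : Ω → ℝ} (hX : MemLp X 2 μ) (hY : MemLp Y 2 μ) (h : X ⟂ᵢ[μ] Y)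
    (a b : ℝ) :
    Var[fun ω => a * X ω + b * Y ω; μ] = a ^ 2 * Var[X; μ] + b ^ 2 * Var[Y; μ] := by
  have hab : (fun ω => a * X ω) ⟂ᵢ[μ] (fun ω => b * Y ω) :=
    h.comp (measurable_const_mul a) (measurable_const_mul b)
  rw [← variance_const_mul, ← variance_const_mul]
  exact hab.variance_add (hX.const_mul a) (hY.const_mul b)

end ProbabilityTheory

theorem bullwhip_measure_deterministic_leadTime
    {Ω : Type*} [MeasurableSpace Ω] (P : Measure Ω)
    (D : ℤ → Ω → ℝ) (L : ℤ → Ω → ℕ) (ℓ : ℕ)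
    (σD2 : ℝ)
    (hD2 : ∀ t, MemLp (D t) 2 P)
    (hLconst : ∀ t, ∀ᵐ ω ∂P, L t ω = ℓ)
    (hIndep : iIndepFun (β := fun i : ℤ ⊕ ℤ => match i with
        | Sum.inl _ => ℝ
        | Sum.inr _ => ℕ)
      (m := fun i => match i with
        | Sum.inl _ => (inferInstance : MeasurableSpace ℝ)
        | Sum.inr _ => (inferInstance : MeasurableSpace ℕ))
      (fun i => match i with
        | Sum.inl t => D t
        | Sum.inr t => L t) P)
    (hσD : ∀ t, variance (D t) P = σD2)
    (n m : ℕ) (hn : 1 ≤ n) (hm : 1 ≤ m)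
    (hσD2pos : 0 < σD2) :
    ∀ t : ℤ, variance (fun ω => ((((m : ℝ)⁻¹ * ∑ i ∈ Finset.Icc 1 m, (L (t - i) ω : ℝ)) * ((n : ℝ)⁻¹ * ∑ i ∈ Finset.Icc 1 n, D (t - i) ω)) - (((m : ℝ)⁻¹ * ∑ i ∈ Finset.Icc 1 m, (L ((t - 1) - i) ω : ℝ)) * ((n : ℝ)⁻¹ * ∑ i ∈ Finset.Icc 1 n, D ((t - 1) - i) ω)) + D (t - 1) ω)) P / variance (D t) P
      = 2 * (ℓ : ℝ) ^ 2 / (n : ℝ) ^ 2 + 2 * (ℓ : ℝ) / (n : ℝ) + 1 := by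
  intro t
  have horder : (fun ω => movingAverage (fun s => (L s ω : ℝ)) m t * movingAverage (D · ω) n t
        - movingAverage (fun s => (L s ω : ℝ)) m (t - 1) * movingAverage (D · ω) n (t - 1)
        + D (t - 1) ω)
      =ᵐ[P] fun ω => (1 + ℓ / n) * D (t - 1) ω + (-(ℓ / n)) * D (t - 1 - n) ω := by
    filter_upwards [ae_all_iff.2 hLconst] with ω hω
    simp only [hω, movingAverage_const _ (by omega : m ≠ 0)]
    exact orderQuantity_of_const_leadTime (D · ω) ℓ n t
  have hlags : Sum.inl (t - 1) ≠ (Sum.inl (t - 1 - n) : ℤ ⊕ ℤ) := by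
    simp only [ne_eq, Sum.inl.injEq]; omega
  have hvar := variance_congr horder
  simp only [movingAverage] at hvar
  rw [hvar, (hIndep.indepFun hlags).variance_const_mul_add_const_mul (hD2 _) (hD2 _),
    hσD, hσD, hσD]
  have hn0 : (n : ℝ) ≠ 0 := by positivity
  field_simp
  ring
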